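/- The action of ℤ generated by a minimal homeomorphism need not be biminimal: there exist points x, y in the Thue-Morse subshift Ω and open neighbourhoods 𝒰 ∋ x, 𝒱 ∋ y such that for no n ∈ ℤ do we have both σⁿ(x) ∈ 𝒱 and σ⁻ⁿ(y) ∈ 𝒰. Concretely, one may take x = ū.u and y = u.u (where u is the Thue-Morse sequence and ū its complement, concatenated at position 0), with 𝒰 = {w ∈ Ω : w(-1)=1, w(0)=0, w(1)=1} and 𝒱 = {w ∈ Ω : w(-1)=0, w(0)=0, w(1)=1}. -/

import Mathlib

/-!
The substitution `ζ` exchanges `x = ū.u` and `y = u.u`, so every factor of length at least 3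
of one of them lies in the `ζ`-image of a strictly shorter factor of the other; by induction on
the length, every factor of `x` or `y` occurs in some `ζⁿ(0)`, i.e. `x, y ∈ Ω`.

For the second part, `y` is symmetric about `-1/2`, while `x` agrees with `y` on `ℕ` and with its
complement on the negative integers. If `σⁿ x ∈ 𝒱` and `σ⁻ⁿ y ∈ 𝒰`, then for `n > 0` we get
`0 = x(n) = y(n) = y(-1-n) = 1`, and for `n ≤ 0` we get `0 = x(n-1) = 1 - y(n-1) = 1 - y(-n) = 1`.
-/

open Fin.NatCast in
/-- Thue-Morse sequence: parity of number of 1s in binary expansion. -/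
def tm (n : ℕ) : Fin 2 := ((Nat.digits 2 n).count 1 : Fin 2)

/-- Thue-Morse substitution on letters. -/
def zetaWord (a : Fin 2) : List (Fin 2) := [a, 1 - a]

/-- Thue-Morse substitution on words. -/
def zetaL (w : List (Fin 2)) : List (Fin 2) := w.flatMap zetaWord

/-- Shift on bi-infinite sequences. -/
def shiftZ (w : ℤ → Fin 2) : ℤ → Fin 2 := fun n => w (n + 1)

/-- ζ on bi-infinite sequences: ζ(w)(2n)=w(n), ζ(w)(2n+1)=1-w(n). -/
def zetaZ (w : ℤ → Fin 2) : ℤ → Fin 2 :=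
  fun n => if n % 2 = 0 then w (n / 2) else 1 - w (n / 2)

/-- `v` occurs as a factor of the bi-infinite word `w`. -/
def IsFactorZ (v : List (Fin 2)) (w : ℤ → Fin 2) : Prop :=
  ∃ i : ℤ, ∀ k : ℕ, k < v.length → w (i + k) = v.getD k 0

/-- The Thue-Morse subshift: bi-infinite words all of whose factors occur in some ζⁿ(0). -/
def Omega : Set (ℤ → Fin 2) :=
  {w | ∀ v : List (Fin 2), IsFactorZ v w → ∃ n : ℕ, v <:+: zetaL^[n] [0]}

/-- x = ū.u : complement of the Thue-Morse word on negative indices, u on ℕ. -/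
noncomputable def xTM : ℤ → Fin 2 :=
  fun n => if 0 ≤ n then tm n.toNat else 1 - tm (-1 - n).toNat

/-- y = u.u. -/
noncomputable def yTM : ℤ → Fin 2 :=
  fun n => if 0 ≤ n then tm n.toNat else tm (-1 - n).toNat

def UU : Set (ℤ → Fin 2) := {w ∈ Omega | w (-1) = 1 ∧ w 0 = 0 ∧ w 1 = 1}
def VV : Set (ℤ → Fin 2) := {w ∈ Omega | w (-1) = 0 ∧ w 0 = 0 ∧ w 1 = 1}

lemma tm_two_mul (n : ℕ) : tm (2 * n) = tm n := by
  rcases Nat.eq_zero_or_pos n with rfl | hpos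
  · rfl
  · rw [tm, Nat.digits_def' (by norm_num) (by omega)]
    simp [tm]

open Fin.NatCast in
lemma tm_two_mul_add_one (n : ℕ) : tm (2 * n + 1) = 1 - tm n := by
  rw [tm, Nat.digits_def' (by norm_num) (by omega)]
  have hmod : (2 * n + 1) % 2 = 1 := by omega
  have hdiv : (2 * n + 1) / 2 = n := by omega
  rw [hmod, hdiv, List.count_cons_self, Nat.cast_add_one, tm]
  generalize ((Nat.digits 2 n).count 1 : Fin 2) = a
  revert a
  decide

lemma zetaZ_two_mul (w : ℤ → Fin 2) (m : ℤ) : zetaZ w (2 * m) = w m := by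
  simp [zetaZ]

lemma zetaZ_two_mul_add_one (w : ℤ → Fin 2) (m : ℤ) : zetaZ w (2 * m + 1) = 1 - w m := by
  simp only [zetaZ, if_neg (by omega : ¬ (2 * m + 1) % 2 = 0)]
  congr 2
  omega

lemma xTM_natCast (k : ℕ) : xTM k = tm k := by simp [xTM]

lemma yTM_natCast (k : ℕ) : yTM k = tm k := by simp [yTM]

lemma xTM_negSucc (k : ℕ) : xTM (Int.negSucc k) = 1 - tm k := by
  simp only [xTM, if_neg (Int.negSucc_lt_zero k).not_ge]
  congr 3
  omega

lemma yTM_negSucc (k : ℕ) : yTM (Int.negSucc k) = tm k := by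
  simp only [yTM, if_neg (Int.negSucc_lt_zero k).not_ge]
  congr 2
  omega

private lemma two_mul_natCast (k : ℕ) : 2 * (k : ℤ) = ((2 * k : ℕ) : ℤ) := by push_cast; rfl

private lemma two_mul_natCast_add_one (k : ℕ) : 2 * (k : ℤ) + 1 = ((2 * k + 1 : ℕ) : ℤ) := by
  push_cast; rfl

private lemma two_mul_negSucc (k : ℕ) : 2 * Int.negSucc k = Int.negSucc (2 * k + 1) := by omega

private lemma two_mul_negSucc_add_one (k : ℕ) : 2 * Int.negSucc k + 1 = Int.negSucc (2 * k) := by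
  omega

private lemma fin_two_sub_sub (a : Fin 2) : 1 - (1 - a) = a := by revert a; decide

lemma zetaZ_xTM : zetaZ xTM = yTM := by
  funext n
  obtain ⟨m, rfl | rfl⟩ := Int.even_or_odd' n
  · rw [zetaZ_two_mul]
    rcases m with k | k <;>
      simp only [Int.ofNat_eq_natCast, two_mul_natCast, two_mul_negSucc, xTM_natCast, yTM_natCast,
        xTM_negSucc, yTM_negSucc, tm_two_mul, tm_two_mul_add_one]
  · rw [zetaZ_two_mul_add_one]
    rcases m with k | k <;>
      simp only [Int.ofNat_eq_natCast, two_mul_natCast_add_one, two_mul_negSucc_add_one,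
        xTM_natCast, yTM_natCast, xTM_negSucc, yTM_negSucc, tm_two_mul, tm_two_mul_add_one,
        fin_two_sub_sub]

lemma zetaZ_yTM : zetaZ yTM = xTM := by
  funext n
  obtain ⟨m, rfl | rfl⟩ := Int.even_or_odd' n
  · rw [zetaZ_two_mul]
    rcases m with k | k <;>
      simp only [Int.ofNat_eq_natCast, two_mul_natCast, two_mul_negSucc, xTM_natCast, yTM_natCast,
        xTM_negSucc, yTM_negSucc, tm_two_mul, tm_two_mul_add_one, fin_two_sub_sub]
  · rw [zetaZ_two_mul_add_one]
    rcases m with k | k <;>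
      simp only [Int.ofNat_eq_natCast, two_mul_natCast_add_one, two_mul_negSucc_add_one,
        xTM_natCast, yTM_natCast, xTM_negSucc, yTM_negSucc, tm_two_mul, tm_two_mul_add_one]

lemma yTM_eq_of_add_eq_neg_one {m n : ℤ} (h : m + n = -1) : yTM m = yTM n := by
  unfold yTM
  split_ifs <;> first | omega | congr 1; omega

lemma xTM_of_nonneg {n : ℤ} (h : 0 ≤ n) : xTM n = yTM n := by simp [xTM, yTM, h]

lemma xTM_of_neg {n : ℤ} (h : n < 0) : xTM n = 1 - yTM n := by simp [xTM, yTM, h.not_ge]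

section Window

variable {α : Type*}

def window (w : ℤ → α) (i : ℤ) : ℕ → List α
  | 0 => []
  | L + 1 => w i :: window w (i + 1) L

@[simp]
lemma length_window (w : ℤ → α) (i : ℤ) (L : ℕ) : (window w i L).length = L := by
  induction L generalizing i <;> simp [window, *]

lemma getElem_window (w : ℤ → α) (i : ℤ) (L k : ℕ) (hk : k < (window w i L).length) :
    (window w i L)[k] = w (i + k) := by
  induction L generalizing i k with
  | zero => simp at hk
  | succ L ih =>
    cases k with
    | zero => simp [window]
    | succ k =>
      simp only [window, List.getElem_cons_succ, ih]
      congr 1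
      push_cast
      ring

lemma window_append (w : ℤ → α) (i : ℤ) (m n : ℕ) :
    window w i m ++ window w (i + m) n = window w i (m + n) := by
  induction m generalizing i with
  | zero => simp [window]
  | succ m ih =>
    rw [Nat.add_right_comm, window, window, List.cons_append, ← ih]
    push_cast
    rw [add_right_comm, add_assoc]

lemma window_infix_window (w : ℤ → α) {i i' : ℤ} {L L' : ℕ}
    (h1 : i' ≤ i) (h2 : i + L ≤ i' + L') :
    window w i L <:+: window w i' L' := by
  obtain ⟨a, ha⟩ := Int.eq_ofNat_of_zero_le (sub_nonneg.2 h1)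
  obtain ⟨b, hb⟩ := Int.eq_ofNat_of_zero_le (sub_nonneg.2 h2)
  refine ⟨window w i' a, window w (i + L) b, ?_⟩
  have hi : i = i' + a := by omega
  rw [List.append_assoc, window_append, hi, window_append]
  congr 1
  omega

end Window

lemma isFactorZ_window (w : ℤ → Fin 2) (i : ℤ) (L : ℕ) : IsFactorZ (window w i L) w :=
  ⟨i, fun k hk => by rw [List.getD_eq_getElem _ _ hk, getElem_window]⟩

lemma IsFactorZ.eq_window {v : List (Fin 2)} {w : ℤ → Fin 2} (h : IsFactorZ v w) :
    ∃ i, v = window w i v.length := by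
  obtain ⟨i, h⟩ := h
  refine ⟨i, List.ext_getElem (by simp) fun k hk _ => ?_⟩
  rw [getElem_window, h k hk, List.getD_eq_getElem _ _ hk]

lemma zetaL_window (w : ℤ → Fin 2) (i : ℤ) (m : ℕ) :
    zetaL (window w i m) = window (zetaZ w) (2 * i) (2 * m) := by
  induction m generalizing i with
  | zero => rfl
  | succ m ih =>
    rw [Nat.mul_succ, window, window, window, zetaL, List.flatMap_cons, ← zetaL, ih,
      zetaZ_two_mul, zetaZ_two_mul_add_one, zetaWord, show 2 * i + 1 + 1 = 2 * (i + 1) by ring]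
    rfl

lemma IsFactorZ.exists_infix_zetaL {w : ℤ → Fin 2} {v : List (Fin 2)}
    (h : IsFactorZ v (zetaZ w)) :
    ∃ v', IsFactorZ v' w ∧ v <:+: zetaL v' ∧ v'.length = v.length / 2 + 1 := by
  obtain ⟨i, hv⟩ := h.eq_window
  refine ⟨window w (i / 2) (v.length / 2 + 1), isFactorZ_window w _ _, ?_, length_window ..⟩
  rw [hv, zetaL_window, length_window]
  exact window_infix_window _ (by omega) (by omega)

lemma infix_zetaL_three_of_length_le_two {v : List (Fin 2)} (h : v.length ≤ 2) :
    v <:+: zetaL^[3] [0] := by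
  match v with
  | [] => exact List.nil_infix
  | [a] => fin_cases a <;> decide
  | [a, b] => fin_cases a <;> fin_cases b <;> decide

theorem subset_Omega_of_forall_eq_zetaZ {S : Set (ℤ → Fin 2)}
    (hS : ∀ w ∈ S, ∃ w' ∈ S, zetaZ w' = w) : S ⊆ Omega := by
  suffices ∀ L, ∀ v : List (Fin 2), v.length = L → ∀ w ∈ S, IsFactorZ v w →
      ∃ n, v <:+: zetaL^[n] [0] from
    fun w hw v hv => this _ v rfl w hw hv
  intro L
  induction L using Nat.strong_induction_on with
  | _ L ih =>
  rintro v rfl w hw hv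
  by_cases hL : v.length ≤ 2
  · exact ⟨3, infix_zetaL_three_of_length_le_two hL⟩
  obtain ⟨w', hw', rfl⟩ := hS w hw
  obtain ⟨v', hv', hinf, hlen⟩ := hv.exists_infix_zetaL
  obtain ⟨n, hn⟩ := ih v'.length (by omega) v' rfl w' hw' hv'
  refine ⟨n + 1, hinf.trans ?_⟩
  rw [Function.iterate_succ_apply']
  exact hn.flatMap zetaWord

lemma isOpen_setOf_apply_eq {ι X : Type*} [TopologicalSpace X] [DiscreteTopology X]
    (i : ι) (a : X) : IsOpen {w : ι → X | w i = a} :=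
  (isOpen_discrete {a}).preimage (continuous_apply (A := fun _ => X) i)

/-- The Thue-Morse system is not biminimal. -/
theorem thue_morse_not_biminimal :
    xTM ∈ Omega ∧ yTM ∈ Omega ∧ xTM ∈ UU ∧ yTM ∈ VV ∧
    IsOpen {w : ℤ → Fin 2 | w (-1) = 1 ∧ w 0 = 0 ∧ w 1 = 1} ∧
    IsOpen {w : ℤ → Fin 2 | w (-1) = 0 ∧ w 0 = 0 ∧ w 1 = 1} ∧
    ∀ n : ℤ, ¬ ((fun k => xTM (k + n)) ∈ VV ∧ (fun k => yTM (k - n)) ∈ UU) := by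
  have hΩ : {xTM, yTM} ⊆ Omega := subset_Omega_of_forall_eq_zetaZ <| by
    rintro w (rfl | rfl)
    · exact ⟨yTM, by simp, zetaZ_yTM⟩
    · exact ⟨xTM, by simp, zetaZ_xTM⟩
  refine ⟨hΩ (by simp), hΩ (by simp), ⟨hΩ (by simp), by decide⟩, ⟨hΩ (by simp), by decide⟩,
    (isOpen_setOf_apply_eq _ _).inter ((isOpen_setOf_apply_eq _ _).inter (isOpen_setOf_apply_eq _ _)),
    (isOpen_setOf_apply_eq _ _).inter ((isOpen_setOf_apply_eq _ _).inter (isOpen_setOf_apply_eq _ _)),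
    ?_⟩
  rintro n ⟨⟨-, hx_neg_one, hx_zero, -⟩, ⟨-, hy_neg_one, hy_zero, -⟩⟩
  dsimp only at hx_neg_one hx_zero hy_neg_one hy_zero
  rcases le_or_gt n 0 with hn | hn
  · have : xTM (-1 + n) = 1 := by
      rw [xTM_of_neg (by omega), yTM_eq_of_add_eq_neg_one (n := 0 - n) (by ring), hy_zero]
      rfl
    exact absurd (this.symm.trans hx_neg_one) (by decide)
  · have : xTM (0 + n) = 1 := by
      rw [xTM_of_nonneg (by omega), yTM_eq_of_add_eq_neg_one (n := -1 - n) (by ring), hy_neg_one]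
    exact absurd (this.symm.trans hx_zero) (by decide)
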